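/- The property of being anti-Eulerian (every vertex has odd degree) is preserved by local complementation: if G is a simple graph in which every vertex has odd degree, then for any vertex v, every vertex of G*v also has odd degree. -/

import Mathlib

/-!
Local complementation at `v` leaves the neighbourhood of every vertex outside `N(v)` unchanged.
For `w ∈ N(v)` the new neighbourhood is `N(w) ∆ (N(v) \ {w})`, whose size has the parity of
`deg w + deg v - 1`; this is odd when both degrees are odd.
-/

/-- Local complementation at a vertex `v`: toggle all edges between
distinct neighbours of `v`. -/
def localComp {V : Type} (G : SimpleGraph V) (v : V) : SimpleGraph V where
  Adj x y := x ≠ y ∧ Xor (G.Adj x y) (G.Adj v x ∧ G.Adj v y)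
  symm := ⟨by
    intro x y ⟨hxy, h⟩
    refine ⟨hxy.symm, ?_⟩
    rw [G.adj_comm y x, and_comm]
    exact h⟩
  loopless := ⟨fun x h => h.1 rfl⟩

/-- Edge local complementation on the edge `{u,v}`: `G*u*v*u`. -/
def elc {V : Type} (G : SimpleGraph V) (u v : V) : SimpleGraph V :=
  localComp (localComp (localComp G u) v) u

instance {V : Type} [DecidableEq V] (G : SimpleGraph V) [DecidableRel G.Adj] (v : V) :
    DecidableRel (localComp G v).Adj := fun x y =>
  inferInstanceAs (Decidable (x ≠ y ∧ Xor (G.Adj x y) (G.Adj v x ∧ G.Adj v y)))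

open Finset
open scoped symmDiff

theorem Finset.card_symmDiff_add_two_mul_card_inter {α : Type*} [DecidableEq α]
    (s t : Finset α) : #(s ∆ t) + 2 * #(s ∩ t) = #s + #t := by
  have hs := card_sdiff_add_card_inter s t
  have ht := card_sdiff_add_card_inter t s
  rw [symmDiff_def, sup_eq_union, card_union_of_disjoint disjoint_sdiff_sdiff, inter_comm t s] at *
  omega

theorem Finset.even_card_symmDiff_iff {α : Type*} [DecidableEq α] (s t : Finset α) :
    Even #(s ∆ t) ↔ (Even #s ↔ Even #t) := by
  rw [← Nat.even_add, ← card_symmDiff_add_two_mul_card_inter, Nat.even_add]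
  simp

namespace SimpleGraph

variable {V : Type} (G : SimpleGraph V) {v w : V}

theorem localComp_adj {x y : V} :
    (localComp G v).Adj x y ↔ x ≠ y ∧ Xor (G.Adj x y) (G.Adj v x ∧ G.Adj v y) :=
  Iff.rfl

variable [Fintype V] [DecidableEq V] [DecidableRel G.Adj]

theorem localComp_neighborFinset_of_adj (hvw : G.Adj v w) :
    (localComp G v).neighborFinset w = G.neighborFinset w ∆ (G.neighborFinset v).erase w := by
  ext y
  have hwy : G.Adj w y → w ≠ y := G.ne_of_adj
  simp only [mem_symmDiff, mem_erase, mem_neighborFinset, localComp_adj, hvw, true_and, xor_def]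
  tauto

theorem localComp_neighborFinset_of_not_adj (hvw : ¬G.Adj v w) :
    (localComp G v).neighborFinset w = G.neighborFinset w := by
  ext y
  have hwy : G.Adj w y → w ≠ y := G.ne_of_adj
  simp only [mem_neighborFinset, localComp_adj, hvw, false_and, xor_def]
  tauto

theorem localComp_degree_of_not_adj (hvw : ¬G.Adj v w) :
    (localComp G v).degree w = G.degree w := by
  rw [← card_neighborFinset_eq_degree, localComp_neighborFinset_of_not_adj G hvw,
    card_neighborFinset_eq_degree]

theorem odd_localComp_degree_iff_of_adj (hvw : G.Adj v w) :
    Odd ((localComp G v).degree w) ↔ (Odd (G.degree w) ↔ Odd (G.degree v)) := by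
  have hv : 1 ≤ G.degree v := G.degree_pos_iff_exists_adj v |>.mpr ⟨w, hvw⟩
  rw [← card_neighborFinset_eq_degree, localComp_neighborFinset_of_adj G hvw,
    ← Nat.not_even_iff_odd, even_card_symmDiff_iff,
    card_erase_of_mem ((G.mem_neighborFinset v w).mpr hvw), card_neighborFinset_eq_degree,
    card_neighborFinset_eq_degree, Nat.even_sub' hv, ← Nat.not_even_iff_odd (n := G.degree w)]
  simp only [odd_one, iff_true, not_iff]

end SimpleGraph

/-- The anti-Eulerian property (all vertex degrees odd) is preserved by
local complementation. -/
theorem localComp_preserves_antiEulerian {V : Type} [Fintype V] [DecidableEq V]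
    (G : SimpleGraph V) [DecidableRel G.Adj] (v : V)
    (h : ∀ w : V, Odd (G.degree w)) :
    ∀ w : V, Odd ((localComp G v).degree w) := by
  intro w
  by_cases hvw : G.Adj v w
  · exact (SimpleGraph.odd_localComp_degree_iff_of_adj G hvw).mpr (iff_of_true (h w) (h v))
  · rw [SimpleGraph.localComp_degree_of_not_adj G hvw]
    exact h w
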